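/- arXiv:2210.01268 — 8 statements merged into one kernel-verified Lean document; each statement's English description precedes it below -/
import Mathlib

section
/- Let M_0, M_1, ..., M_k be n×n real matrices, and write each M_i = Λ_i − C_i where Λ_i is the diagonal part of M_i (assumed to have all positive diagonal entries). If the spectral radius of the entrywise maximum matrix W := max_{0≤i≤k} (Λ_i^{-1} |C_i|) satisfies ρ(W) < 1, then for every tuple (D_0, ..., D_k) of nonnegative diagonal matrices with entries in [0,1] and D_0 + ... + D_k = I, the matrix S = Σ_{i=0}^k D_i M_i is nonsingular. -/
/-!
If `S v = 0` with `v ≠ 0`, put `u = |v|`. Each row of `S` is a convex combination of the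
corresponding rows of the `M i`, so `|S s t| ≤ W s t * S s s` off the diagonal, and solving the
`s`-th equation of `S v = 0` for `S s s * v s` gives `u ≤ W u`. As `W ≥ 0` this iterates to
`u ≤ W ^ m u` for every `m`, while Gelfand's formula provides an `m` with `‖W ^ m‖ < 1` in the
`ℓ∞` operator norm, forcing `u = 0`.
-/

open Matrix Filter

attribute [local instance] Matrix.linftyOpNormedAddCommGroup Matrix.linftyOpNormedRing
  Matrix.linftyOpNormedAlgebra

theorem spectrum.exists_nnnorm_pow_lt_one_of_spectralRadius_lt_one {A : Type*} [NormedRing A]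
    [NormedAlgebra ℂ A] [CompleteSpace A] {a : A} (ha : spectralRadius ℂ a < 1) :
    ∃ m, ‖a ^ m‖₊ < 1 := by
  obtain ⟨m, hm, hm_pos⟩ :=
    (((spectrum.pow_nnnorm_pow_one_div_tendsto_nhds_spectralRadius a).eventually_lt_const ha).and
      (eventually_gt_atTop 0)).exists
  refine ⟨m, ?_⟩
  by_contra! h
  exact hm.not_ge (ENNReal.one_le_rpow (by exact_mod_cast h) (by positivity))

namespace Matrix

variable {ι κ : Type*} [Fintype ι]

theorem linfty_opNNNorm_map_ofReal [Fintype κ] (A : Matrix ι κ ℝ) :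
    ‖A.map Complex.ofReal‖₊ = ‖A‖₊ := by
  simp only [linfty_opNNNorm_def, map_apply, Complex.nnnorm_real]

theorem mulVec_mono_of_nonneg {W : Matrix κ ι ℝ} (hW : ∀ s t, 0 ≤ W s t) {u v : ι → ℝ}
    (huv : u ≤ v) : W *ᵥ u ≤ W *ᵥ v := fun s =>
  dotProduct_le_dotProduct_of_nonneg_left huv (hW s)

theorem le_pow_mulVec_of_le_mulVec [DecidableEq ι] {W : Matrix ι ι ℝ} (hW : ∀ s t, 0 ≤ W s t)
    {u : ι → ℝ} (hu : u ≤ W *ᵥ u) (m : ℕ) : u ≤ (W ^ m) *ᵥ u := by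
  induction m with
  | zero => simp
  | succ m ih =>
    calc u ≤ W *ᵥ u := hu
      _ ≤ W *ᵥ ((W ^ m) *ᵥ u) := mulVec_mono_of_nonneg hW ih
      _ = (W ^ (m + 1)) *ᵥ u := by rw [mulVec_mulVec, pow_succ']

theorem eq_zero_of_le_mulVec_of_spectralRadius_lt_one [DecidableEq ι] {W : Matrix ι ι ℝ}
    (hW : ∀ s t, 0 ≤ W s t) (hρ : spectralRadius ℂ (W.map Complex.ofReal) < 1) {u : ι → ℝ}
    (hu0 : 0 ≤ u) (hu : u ≤ W *ᵥ u) : u = 0 := by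
  obtain ⟨m, hm⟩ := spectrum.exists_nnnorm_pow_lt_one_of_spectralRadius_lt_one hρ
  have hpow : W.map Complex.ofReal ^ m = (W ^ m).map Complex.ofReal :=
    (W.map_pow Complex.ofRealHom m).symm
  rw [hpow, linfty_opNNNorm_map_ofReal] at hm
  have hmono := le_pow_mulVec_of_le_mulVec hW hu m
  have hle : ‖u‖₊ ≤ ‖W ^ m‖₊ * ‖u‖₊ := calc
    ‖u‖₊ ≤ ‖(W ^ m) *ᵥ u‖₊ := pi_nnnorm_le_iff.2 fun s => by
      refine le_trans ?_ (nnnorm_le_pi_nnnorm _ s)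
      rw [← NNReal.coe_le_coe, coe_nnnorm, coe_nnnorm, Real.norm_of_nonneg (hu0 s),
        Real.norm_of_nonneg ((hu0 s).trans (hmono s))]
      exact hmono s
    _ ≤ ‖W ^ m‖₊ * ‖u‖₊ := linfty_opNNNorm_mulVec _ _
  by_contra hne
  exact (mul_lt_of_lt_one_left (nnnorm_pos.2 hne) hm).not_ge hle

theorem abs_le_mulVec_abs_of_mulVec_eq_zero [DecidableEq ι] {A W : Matrix ι ι ℝ}
    (hW : ∀ s t, 0 ≤ W s t) (hA : ∀ s, 0 < A s s)
    (hAW : ∀ s t, s ≠ t → |A s t| ≤ W s t * A s s) {v : ι → ℝ} (hv : A *ᵥ v = 0) :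
    |v| ≤ W *ᵥ |v| := by
  intro s
  have hrow : A s s * v s = -∑ t ∈ Finset.univ.erase s, A s t * v t := by
    have h := congrFun hv s
    rw [mulVec, dotProduct, ← Finset.add_sum_erase _ _ (Finset.mem_univ s)] at h
    exact eq_neg_of_add_eq_zero_left h
  have hscaled : A s s * |v s| ≤ A s s * (W *ᵥ |v|) s := calc
    A s s * |v s| = |A s s * v s| := by rw [abs_mul, abs_of_pos (hA s)]
    _ = |∑ t ∈ Finset.univ.erase s, A s t * v t| := by rw [hrow, abs_neg]
    _ ≤ ∑ t ∈ Finset.univ.erase s, |A s t| * |v t| := by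
      simpa only [abs_mul] using Finset.abs_sum_le_sum_abs (fun t => A s t * v t) _
    _ ≤ ∑ t ∈ Finset.univ.erase s, A s s * (W s t * |v t|) := Finset.sum_le_sum fun t ht => by
      have h := mul_le_mul_of_nonneg_right (hAW s t (Finset.ne_of_mem_erase ht).symm)
        (abs_nonneg (v t))
      linarith
    _ ≤ ∑ t, A s s * (W s t * |v t|) :=
      Finset.sum_le_sum_of_subset_of_nonneg (Finset.erase_subset _ _) fun t _ _ =>
        mul_nonneg (hA s).le (mul_nonneg (hW s t) (abs_nonneg _))
    _ = A s s * (W *ᵥ |v|) s := by rw [← Finset.mul_sum]; rfl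
  exact le_of_mul_le_mul_left hscaled (hA s)

theorem isUnit_of_abs_apply_le_mul_diag [DecidableEq ι] {A W : Matrix ι ι ℝ}
    (hW : ∀ s t, 0 ≤ W s t) (hρ : spectralRadius ℂ (W.map Complex.ofReal) < 1)
    (hA : ∀ s, 0 < A s s) (hAW : ∀ s t, s ≠ t → |A s t| ≤ W s t * A s s) : IsUnit A := by
  rw [isUnit_iff_isUnit_det, isUnit_iff_ne_zero]
  intro hdet
  obtain ⟨v, hv0, hv⟩ := exists_mulVec_eq_zero_iff.2 hdet
  exact hv0 <| (Pi.abs_eq_zero v).1 <| eq_zero_of_le_mulVec_of_spectralRadius_lt_one hW hρ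
    (abs_nonneg v) (abs_le_mulVec_abs_of_mulVec_eq_zero hW hA hAW hv)

section DiagonalCombination

variable [Fintype κ] [DecidableEq ι]

theorem sum_diagonal_mul_apply {R : Type*} [Semiring R] (d : κ → ι → R) (M : κ → Matrix ι ι R)
    (s t : ι) : (∑ i, diagonal (d i) * M i) s t = ∑ i, d i s * M i s t := by
  simp only [sum_apply, diagonal_mul]

variable {d : κ → ι → ℝ} {M : κ → Matrix ι ι ℝ} {s : ι}

theorem sum_diagonal_mul_apply_self_pos (hd : ∀ i, 0 ≤ d i s) (hsum : ∑ i, d i s = 1)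
    (hM : ∀ i, 0 < M i s s) : 0 < (∑ i, diagonal (d i) * M i) s s := by
  obtain ⟨j, -, hj⟩ := Finset.exists_lt_of_sum_lt (f := 0) (s := Finset.univ)
    (by simp [hsum] : ∑ i, (0 : κ → ℝ) i < ∑ i, d i s)
  rw [sum_diagonal_mul_apply]
  exact Finset.sum_pos' (fun i _ => mul_nonneg (hd i) (hM i).le)
    ⟨j, Finset.mem_univ j, mul_pos hj (hM j)⟩

theorem abs_sum_diagonal_mul_apply_le {t : ι} {w : ℝ} (hd : ∀ i, 0 ≤ d i s)
    (hM : ∀ i, |M i s t| ≤ w * M i s s) :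
    |(∑ i, diagonal (d i) * M i) s t| ≤ w * (∑ i, diagonal (d i) * M i) s s := by
  simp only [sum_diagonal_mul_apply, Finset.mul_sum]
  refine (Finset.abs_sum_le_sum_abs _ _).trans (Finset.sum_le_sum fun i _ => ?_)
  rw [abs_mul, abs_of_nonneg (hd i), mul_left_comm]
  exact mul_le_mul_of_nonneg_left (hM i) (hd i)

end DiagonalCombination

end Matrix

theorem stmt_4 (n k : ℕ) (M : Fin (k+1) → Matrix (Fin n) (Fin n) ℝ)
    (hdiag : ∀ i s, 0 < M i s s)
    (W : Matrix (Fin n) (Fin n) ℝ)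
    (hW : ∀ s t, W s t = ⨆ i, |(Matrix.diagonal (fun u => M i u u) - M i) s t| / M i s s)
    (hρ : spectralRadius ℂ (W.map (Complex.ofReal : ℝ → ℂ)) < 1)
    (d : Fin (k+1) → Fin n → ℝ)
    (hd : ∀ i s, d i s ∈ Set.Icc (0:ℝ) 1) (hsum : ∀ s, ∑ i, d i s = 1) :
    IsUnit (∑ i, Matrix.diagonal (d i) * M i) := by
  have hle : ∀ i s t, |(diagonal (fun u => M i u u) - M i) s t| / M i s s ≤ W s t :=
    fun i s t => (Finite.le_ciSup_of_le i le_rfl).trans_eq (hW s t).symm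
  have hW0 : ∀ s t, 0 ≤ W s t := fun s t =>
    (div_nonneg (abs_nonneg _) (hdiag 0 s).le).trans (hle 0 s t)
  have hMW : ∀ i s t, s ≠ t → |M i s t| ≤ W s t * M i s s := fun i s t hst => by
    have h := hle i s t
    rwa [Matrix.sub_apply, diagonal_apply_ne _ hst, zero_sub, abs_neg,
      div_le_iff₀ (hdiag i s)] at h
  have hd0 : ∀ i s, 0 ≤ d i s := fun i s => (hd i s).1
  exact isUnit_of_abs_apply_le_mul_diag hW0 hρ
    (fun s => sum_diagonal_mul_apply_self_pos (hd0 · s) (hsum s) (hdiag · s))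
    (fun s t hst => abs_sum_diagonal_mul_apply_le (hd0 · s) (hMW · s t hst))
end

section
/- There exist 2×2 symmetric positive definite matrices M_0 and M_1 (namely M_0 = [[2,1],[1,1]] and M_1 = [[1,1],[1,2]]) and nonnegative diagonal matrices D_0 = diag(0,1), D_1 = diag(1,0) with D_0 + D_1 = I such that D_0 M_0 + D_1 M_1 is singular. -/
open Matrix

theorem posDef_of_fin_two {R : Type*} [CommRing R] [LinearOrder R] [IsStrictOrderedRing R]
    [StarRing R] [TrivialStar R] {a b c : R} (ha : 0 < a) (hdet : b ^ 2 < a * c) :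
    (!![a, b; b, c] : Matrix (Fin 2) (Fin 2) R).PosDef := by
  refine PosDef.of_dotProduct_mulVec_pos ?_ fun x hx => ?_
  · ext i j
    fin_cases i <;> fin_cases j <;> simp
  simp only [star_trivial, dotProduct, mulVec, Fin.sum_univ_two, cons_val', cons_val_zero,
    cons_val_one, empty_val', cons_val_fin_one, of_apply]
  have hsq : a * (x 0 * (a * x 0 + b * x 1) + x 1 * (b * x 0 + c * x 1)) =
      (a * x 0 + b * x 1) ^ 2 + (a * c - b ^ 2) * x 1 ^ 2 := by ring
  refine pos_of_mul_pos_right (hsq ▸ ?_) ha.le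
  by_cases h1 : x 1 = 0
  · have h0 : x 0 ≠ 0 := fun h0 => hx (funext fun i => by fin_cases i <;> simp [h0, h1])
    simpa [h1] using sq_pos_of_ne_zero (mul_ne_zero ha.ne' h0)
  · have := sub_pos.2 hdet
    positivity

theorem stmt_5 :
    ∃ (M₀ M₁ D₀ D₁ : Matrix (Fin 2) (Fin 2) ℝ),
      M₀ = !![2, 1; 1, 1] ∧ M₁ = !![1, 1; 1, 2] ∧
      M₀.PosDef ∧ M₁.PosDef ∧
      D₀ = Matrix.diagonal ![0, 1] ∧ D₁ = Matrix.diagonal ![1, 0] ∧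
      (∀ i, D₀ i i ∈ Set.Icc (0:ℝ) 1) ∧ (∀ i, D₁ i i ∈ Set.Icc (0:ℝ) 1) ∧
      D₀ + D₁ = 1 ∧
      ¬ IsUnit (D₀ * M₀ + D₁ * M₁) := by
  refine ⟨_, _, _, _, rfl, rfl, posDef_of_fin_two (by norm_num) (by norm_num),
    posDef_of_fin_two (by norm_num) (by norm_num), rfl, rfl, ?_, ?_, ?_, ?_⟩
  · intro i; fin_cases i <;> simp
  · intro i; fin_cases i <;> simp
  · ext i j; fin_cases i <;> fin_cases j <;> simp [one_apply]
  -- the combination takes row `0` of `M₁` and row `1` of `M₀`, both equal to `(1, 1)`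
  rw [isUnit_iff_isUnit_det, det_zero_of_row_eq (zero_ne_one : (0 : Fin 2) ≠ 1)]
  · exact not_isUnit_zero
  · ext j; fin_cases j <;> simp [mul_apply, Fin.sum_univ_two]
end

section
/- Let A be an n×n strictly diagonally dominant matrix with ⟨A⟩e > 0, and let D = diag(d_1,...,d_n) with d_j ∈ [0,1]. Then the infinity-norm bound ‖A^{-1} D‖_∞ ≤ max_j ( d_j / (⟨A⟩e)_j ) holds. -/
open Matrix

attribute [local instance] Matrix.linftyOpNormedRing

/-- Strict diagonal dominance. -/
def SDD {n : ℕ} (A : Matrix (Fin n) (Fin n) ℝ) : Prop :=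
  ∀ s, ∑ t ∈ Finset.univ.erase s, |A s t| < |A s s|

/-- The comparison matrix `⟨A⟩`. -/
def cmpMat {n : ℕ} (A : Matrix (Fin n) (Fin n) ℝ) : Matrix (Fin n) (Fin n) ℝ :=
  fun s t => if s = t then |A s s| else -|A s t|

/-!
Write `β = ⟨A⟩e`. If `|y k|` is the largest entry of `y`, the `k`-th row of `A y` satisfies
`|(A y)_k| ≥ |a_kk| |y_k| - ∑_{t ≠ k} |a_kt| |y_t| ≥ β_k |y_k|`, hence
`‖y‖_∞ ≤ max_j |(A y)_j| / β_j`. For `y = A⁻¹ D x` we have `A y = D x`, so `|(A y)_j| ≤ d_j ‖x‖_∞`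
and `‖A⁻¹ D x‖_∞ ≤ (max_j d_j / β_j) ‖x‖_∞`.
-/

open Finset

namespace Matrix

section

attribute [local instance] Matrix.linftyOpNormedAddCommGroup

lemma linfty_opNorm_le_of_mulVec_le {m n α : Type*} [Fintype m] [Fintype n]
    [NontriviallyNormedField α] [NormedAlgebra ℝ α] {M : Matrix m n α} {c : ℝ} (hc : 0 ≤ c)
    (hM : ∀ v, ‖M *ᵥ v‖ ≤ c * ‖v‖) : ‖M‖ ≤ c := by
  rw [linfty_opNorm_eq_opNorm]
  exact ContinuousLinearMap.opNorm_le_bound _ hc hM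

end

variable {n : ℕ}

lemma cmpMat_mulVec_one_apply (A : Matrix (Fin n) (Fin n) ℝ) (k : Fin n) :
    (cmpMat A *ᵥ fun _ => (1:ℝ)) k = |A k k| - ∑ t ∈ univ.erase k, |A k t| := by
  rw [mulVec, dotProduct, ← add_sum_erase _ _ (mem_univ k), sub_eq_add_neg, ← sum_neg_distrib]
  refine congrArg₂ _ (by simp [cmpMat]) (sum_congr rfl fun t ht => ?_)
  simp [cmpMat, (ne_of_mem_erase ht).symm]

lemma cmpMat_mulVec_one_mul_abs_le_abs_mulVec (A : Matrix (Fin n) (Fin n) ℝ) (y : Fin n → ℝ)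
    {k : Fin n} (hk : ∀ t, |y t| ≤ |y k|) :
    (cmpMat A *ᵥ fun _ => (1:ℝ)) k * |y k| ≤ |(A *ᵥ y) k| := by
  have hoff : |∑ t ∈ univ.erase k, A k t * y t| ≤ ∑ t ∈ univ.erase k, |A k t| * |y k| :=
    (abs_sum_le_sum_abs _ _).trans <| sum_le_sum fun t _ => by
      rw [abs_mul]
      exact mul_le_mul_of_nonneg_left (hk t) (abs_nonneg _)
  calc (cmpMat A *ᵥ fun _ => (1:ℝ)) k * |y k|
      = |A k k * y k| - ∑ t ∈ univ.erase k, |A k t| * |y k| := by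
        rw [cmpMat_mulVec_one_apply, sub_mul, sum_mul, abs_mul]
    _ ≤ |A k k * y k| - |∑ t ∈ univ.erase k, A k t * y t| := by gcongr
    _ ≤ |A k k * y k + ∑ t ∈ univ.erase k, A k t * y t| := abs_sub_abs_le_abs_add _ _
    _ = |(A *ᵥ y) k| := by rw [mulVec, dotProduct, ← add_sum_erase _ _ (mem_univ k)]

lemma abs_le_iSup_abs_mulVec_div_cmpMat_mulVec_one (A : Matrix (Fin n) (Fin n) ℝ)
    (hA : ∀ j, 0 < (cmpMat A *ᵥ fun _ => (1:ℝ)) j) (y : Fin n → ℝ) (i : Fin n) :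
    |y i| ≤ ⨆ j, |(A *ᵥ y) j| / (cmpMat A *ᵥ fun _ => (1:ℝ)) j := by
  obtain ⟨k, -, hk⟩ := exists_max_image univ (fun t => |y t|) ⟨i, mem_univ i⟩
  have hk : ∀ t, |y t| ≤ |y k| := fun t => hk t (mem_univ t)
  calc |y i| ≤ |y k| := hk i
    _ ≤ |(A *ᵥ y) k| / (cmpMat A *ᵥ fun _ => (1:ℝ)) k := by
        rw [le_div_iff₀ (hA k), mul_comm]
        exact cmpMat_mulVec_one_mul_abs_le_abs_mulVec A y hk
    _ ≤ _ := le_ciSup (f := fun j => |(A *ᵥ y) j| / (cmpMat A *ᵥ fun _ => (1:ℝ)) j)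
        (Set.finite_range _).bddAbove k

end Matrix

theorem stmt_8 (n : ℕ) (A : Matrix (Fin n) (Fin n) ℝ)
    (hsdd : SDD A) (hA : ∀ j, 0 < (cmpMat A *ᵥ fun _ => (1:ℝ)) j)
    (d : Fin n → ℝ) (hd : ∀ j, d j ∈ Set.Icc (0:ℝ) 1) :
    ‖A⁻¹ * Matrix.diagonal d‖ ≤ ⨆ j, d j / (cmpMat A *ᵥ fun _ => (1:ℝ)) j := by
  set β := cmpMat A *ᵥ fun _ => (1:ℝ)
  set c := ⨆ j, d j / β j
  have hdet : IsUnit A.det := (det_ne_zero_of_sum_row_lt_diag (A := A) hsdd).isUnit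
  have hc : ∀ j, d j / β j ≤ c := le_ciSup (Set.finite_range _).bddAbove
  have hc0 : 0 ≤ c := Real.iSup_nonneg fun j => div_nonneg (hd j).1 (hA j).le
  refine linfty_opNorm_le_of_mulVec_le hc0 fun x => ?_
  have hAy : A *ᵥ (A⁻¹ * diagonal d) *ᵥ x = fun j => d j * x j := by
    rw [mulVec_mulVec, ← Matrix.mul_assoc, mul_nonsing_inv A hdet, Matrix.one_mul]
    exact funext (mulVec_diagonal d x)
  refine (pi_norm_le_iff_of_nonneg (by positivity)).2 fun i => ?_
  refine (abs_le_iSup_abs_mulVec_div_cmpMat_mulVec_one A hA _ i).trans ?_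
  refine Real.iSup_le (fun j => ?_) (by positivity)
  rw [hAy, abs_mul, abs_of_nonneg (hd j).1, mul_div_right_comm]
  exact mul_le_mul (hc j) (norm_le_pi_norm x j) (abs_nonneg _) hc0
end

section
/- Let M_0,...,M_k be n×n matrices such that D_0 M_0 + ... + D_k M_k is nonsingular for all nonnegative diagonal D_i with entries in [0,1] and Σ D_i = I (row W-property), and let α_i := max over such tuples of ‖(Σ_j D_j M_j)^{-1} D_i‖. If A_0,...,A_k are n×n matrices with Σ_{i=0}^k α_i ‖A_i − M_i‖ ≤ η < 1, then D_0 A_0 + ... + D_k A_k is nonsingular for all tuples (D_0,...,D_k) as above; i.e., (A_0,...,A_k) also has the row W-property. -/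
/-! The matrix `S = ∑ Dᵢ Mᵢ` is invertible by the row W-property of `M`, and
`∑ Dᵢ Aᵢ = S (1 + S⁻¹ ∑ Dᵢ (Aᵢ - Mᵢ))`. Since `S⁻¹ Dᵢ` has norm at most `αᵢ`, the perturbation
`S⁻¹ ∑ Dᵢ (Aᵢ - Mᵢ)` has norm at most `∑ αᵢ ‖Aᵢ - Mᵢ‖ ≤ η < 1`, so the second factor is
invertible by the Neumann series. -/

open Matrix

attribute [local instance] Matrix.linftyOpNormedRing

theorem Matrix.linftyOp_hasSummableGeomSeries {𝕜 : Type*} [NontriviallyNormedField 𝕜]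
    [CompleteSpace 𝕜] (m : Type*) [Fintype m] [DecidableEq m] :
    HasSummableGeomSeries (Matrix m m 𝕜) :=
  letI : NormedSpace 𝕜 (Matrix m m 𝕜) := Matrix.linftyOpNormedSpace
  @instHasSummableGeomSeriesOfCompleteSpace _ _ (FiniteDimensional.complete 𝕜 _)

theorem Units.isUnit_of_norm_inv_mul_sub_lt_one {R : Type*} [NormedRing R]
    [HasSummableGeomSeries R] (u : Rˣ) {b : R} (h : ‖(↑u⁻¹ : R) * (b - u)‖ < 1) : IsUnit b := by
  have hb : b = u * (1 - -((↑u⁻¹ : R) * (b - u))) := by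
    rw [sub_neg_eq_add, mul_add, mul_one, ← mul_assoc, Units.mul_inv, one_mul, add_sub_cancel]
  rw [hb]
  exact u.isUnit.mul (isUnit_one_sub_of_norm_lt_one (by rwa [norm_neg]))

theorem norm_mul_sum_mul_sub_sum_mul_le {R ι : Type*} [NormedRing R] (s : Finset ι)
    (x : R) (y a m : ι → R) :
    ‖x * (∑ i ∈ s, y i * a i - ∑ i ∈ s, y i * m i)‖ ≤ ∑ i ∈ s, ‖x * y i‖ * ‖a i - m i‖ := by
  have hsum : x * (∑ i ∈ s, y i * a i - ∑ i ∈ s, y i * m i) = ∑ i ∈ s, x * y i * (a i - m i) := by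
    simp only [← Finset.sum_sub_distrib, ← mul_sub, Finset.mul_sum, mul_assoc]
  rw [hsum]
  exact (norm_sum_le _ _).trans (Finset.sum_le_sum fun i _ ↦ norm_mul_le _ _)

theorem stmt_11 (n k : ℕ) (M : Fin (k+1) → Matrix (Fin n) (Fin n) ℝ)
    (hW : ∀ d : Fin (k+1) → Fin n → ℝ,
      (∀ i s, d i s ∈ Set.Icc (0:ℝ) 1) → (∀ s, ∑ i, d i s = 1) →
      IsUnit (∑ i, Matrix.diagonal (d i) * M i))
    (α : Fin (k+1) → ℝ)
    (hα : ∀ i, IsGreatest {r : ℝ | ∃ d : Fin (k+1) → Fin n → ℝ,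
      (∀ i' s, d i' s ∈ Set.Icc (0:ℝ) 1) ∧ (∀ s, ∑ i', d i' s = 1) ∧
      r = ‖(∑ i', Matrix.diagonal (d i') * M i')⁻¹ * Matrix.diagonal (d i)‖} (α i))
    (A : Fin (k+1) → Matrix (Fin n) (Fin n) ℝ) (η : ℝ)
    (hA : ∑ i, α i * ‖A i - M i‖ ≤ η) (hη : η < 1) :
    ∀ d : Fin (k+1) → Fin n → ℝ,
      (∀ i s, d i s ∈ Set.Icc (0:ℝ) 1) → (∀ s, ∑ i, d i s = 1) →
      IsUnit (∑ i, Matrix.diagonal (d i) * A i) := by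
  have := Matrix.linftyOp_hasSummableGeomSeries (𝕜 := ℝ) (Fin n)
  intro d hd hsum
  obtain ⟨S, hS⟩ := hW d hd hsum
  refine S.isUnit_of_norm_inv_mul_sub_lt_one ?_
  have hαd : ∀ i, ‖(↑S⁻¹ : Matrix (Fin n) (Fin n) ℝ) * diagonal (d i)‖ ≤ α i := fun i ↦ by
    rw [coe_units_inv, hS]
    exact (hα i).2 ⟨d, hd, hsum, rfl⟩
  calc ‖(↑S⁻¹ : Matrix (Fin n) (Fin n) ℝ) * (∑ i, diagonal (d i) * A i - S)‖
      ≤ ∑ i, ‖(↑S⁻¹ : Matrix (Fin n) (Fin n) ℝ) * diagonal (d i)‖ * ‖A i - M i‖ := by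
        rw [hS]; exact norm_mul_sum_mul_sub_sum_mul_le _ _ _ _ _
    _ ≤ ∑ i, α i * ‖A i - M i‖ :=
        Finset.sum_le_sum fun i _ ↦ mul_le_mul_of_nonneg_right (hαd i) (norm_nonneg _)
    _ < 1 := hA.trans_lt hη
end

section
/- Let M_0,...,M_k have the row W-property with constants α_i := max over tuples (D_0,...,D_k) ∈ D of ‖(Σ_j D_j M_j)^{-1} D_i‖, and let x* and y* be the unique solutions of min_{0≤i≤k}(M_i x + q_i) = 0 and min_{0≤i≤k}(M_i y + q̃_i) = 0 respectively. Then ‖x* − y*‖ ≤ Σ_{i=0}^k α_i ‖q̃_i − q_i‖. -/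
/-!
Fix a coordinate `s`. Both families of residuals `(M i x + q i) s` and `(M i y + q' i) s` are
nonnegative with a vanishing entry, so their difference changes sign and some convex combination
of it vanishes. Collecting these weights into diagonal matrices `D i` gives
`(∑ D i M i) (x - y) = ∑ D i (q' i - q i)`; inverting the row-W matrix `∑ D i M i` and bounding
each term by `α i` yields the estimate.
-/

open Matrix

attribute [local instance] Matrix.linftyOpNormedRing

lemma exists_convex_weights_sum_mul_eq {ι : Type*} [Fintype ι] [DecidableEq ι] {v : ι → ℝ}
    {c : ℝ} {j₁ j₂ : ι} (h₁ : v j₁ ≤ c) (h₂ : c ≤ v j₂) :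
    ∃ w : ι → ℝ, (∀ i, w i ∈ Set.Icc (0 : ℝ) 1) ∧ ∑ i, w i = 1 ∧ ∑ i, w i * v i = c := by
  obtain ⟨a, b, ha, hb, hab, rfl⟩ : c ∈ segment ℝ (v j₁) (v j₂) :=
    (segment_eq_Icc (h₁.trans h₂)).symm ▸ ⟨h₁, h₂⟩
  set w : ι → ℝ := a • Pi.single j₁ 1 + b • Pi.single j₂ 1
  have hw₀ i : 0 ≤ w i := by
    simp only [w, Pi.add_apply, Pi.smul_apply, Pi.single_apply, smul_eq_mul]
    split_ifs <;> positivity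
  have hw₁ : ∑ i, w i = 1 := by simp [w, Finset.sum_add_distrib, Pi.single_apply, hab]
  refine ⟨w, fun i => ⟨hw₀ i, ?_⟩, hw₁, ?_⟩
  · exact hw₁ ▸ Finset.single_le_sum (fun j _ => hw₀ j) (Finset.mem_univ i)
  · simp [w, add_mul, Finset.sum_add_distrib, Pi.single_apply]

lemma exists_convex_weights_sum_mul_sub_eq_zero {ι : Type*} [Fintype ι] [Nonempty ι]
    [DecidableEq ι] {a b : ι → ℝ} (ha : ⨅ i, a i = 0) (hb : ⨅ i, b i = 0) :
    ∃ w : ι → ℝ, (∀ i, w i ∈ Set.Icc (0 : ℝ) 1) ∧ ∑ i, w i = 1 ∧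
      ∑ i, w i * (a i - b i) = 0 := by
  obtain ⟨i₁, hi₁⟩ := exists_eq_ciInf_of_finite (f := a)
  obtain ⟨i₂, hi₂⟩ := exists_eq_ciInf_of_finite (f := b)
  have ha₀ i : 0 ≤ a i := ha ▸ ciInf_le (Finite.bddBelow_range a) i
  have hb₀ i : 0 ≤ b i := hb ▸ ciInf_le (Finite.bddBelow_range b) i
  exact exists_convex_weights_sum_mul_eq (v := a - b) (j₁ := i₁) (j₂ := i₂)
    (by simp only [Pi.sub_apply]; linarith [hb₀ i₁]) (by simp only [Pi.sub_apply]; linarith [ha₀ i₂])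

lemma sum_diagonal_mul_mulVec_sub {ι m R : Type*} [Fintype ι] [Fintype m] [DecidableEq m]
    [CommRing R] (M : ι → Matrix m m R) (d q q' : ι → m → R) (x y : m → R)
    (h : ∀ s, ∑ i, d i s * ((M i *ᵥ x + q i) s - (M i *ᵥ y + q' i) s) = 0) :
    (∑ i, diagonal (d i) * M i) *ᵥ (x - y) = ∑ i, diagonal (d i) *ᵥ (q' i - q i) := by
  ext s
  have hs := h s
  simp only [Pi.add_apply, mul_sub, mul_add, Finset.sum_sub_distrib, Finset.sum_add_distrib] at hs
  simp only [sum_mulVec, ← mulVec_mulVec, mulVec_diagonal, mulVec_sub, Finset.sum_apply,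
    Pi.sub_apply, Finset.sum_sub_distrib]
  linear_combination hs

lemma norm_sub_le_of_isUnit_of_mulVec_sub_eq {ι m : Type*} [Fintype ι] [Fintype m]
    [DecidableEq m] {A : Matrix m m ℝ} (hA : IsUnit A) (B : ι → Matrix m m ℝ)
    (v : ι → m → ℝ) {x y : m → ℝ} (h : A *ᵥ (x - y) = ∑ i, B i *ᵥ v i) :
    ‖x - y‖ ≤ ∑ i, ‖A⁻¹ * B i‖ * ‖v i‖ := by
  have hxy : x - y = ∑ i, (A⁻¹ * B i) *ᵥ v i := by
    rw [← one_mulVec (x - y), ← nonsing_inv_mul A ((isUnit_iff_isUnit_det A).mp hA),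
      ← mulVec_mulVec, h, mulVec_sum]
    simp only [mulVec_mulVec]
  calc ‖x - y‖ ≤ ∑ i, ‖(A⁻¹ * B i) *ᵥ v i‖ := hxy ▸ norm_sum_le _ _
    _ ≤ ∑ i, ‖A⁻¹ * B i‖ * ‖v i‖ := Finset.sum_le_sum fun i _ => linfty_opNorm_mulVec _ _

theorem stmt_12 (n k : ℕ) (M : Fin (k+1) → Matrix (Fin n) (Fin n) ℝ)
    (hW : ∀ d : Fin (k+1) → Fin n → ℝ,
      (∀ i s, d i s ∈ Set.Icc (0:ℝ) 1) → (∀ s, ∑ i, d i s = 1) →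
      IsUnit (∑ i, Matrix.diagonal (d i) * M i))
    (α : Fin (k+1) → ℝ)
    (hα : ∀ i, IsGreatest {r : ℝ | ∃ d : Fin (k+1) → Fin n → ℝ,
      (∀ i' s, d i' s ∈ Set.Icc (0:ℝ) 1) ∧ (∀ s, ∑ i', d i' s = 1) ∧
      r = ‖(∑ i', Matrix.diagonal (d i') * M i')⁻¹ * Matrix.diagonal (d i)‖} (α i))
    (q q' : Fin (k+1) → Fin n → ℝ) (x y : Fin n → ℝ)
    (hx : ∀ s, (⨅ i, (M i *ᵥ x + q i) s) = 0)
    (hy : ∀ s, (⨅ i, (M i *ᵥ y + q' i) s) = 0) :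
    ‖x - y‖ ≤ ∑ i, α i * ‖q' i - q i‖ := by
  choose w hw_mem hw_sum hw using fun s => exists_convex_weights_sum_mul_sub_eq_zero (hx s) (hy s)
  set d : Fin (k+1) → Fin n → ℝ := fun i s => w s i
  have hd_mem : ∀ i s, d i s ∈ Set.Icc (0:ℝ) 1 := fun i s => hw_mem s i
  calc ‖x - y‖
      ≤ ∑ i, ‖(∑ i', diagonal (d i') * M i')⁻¹ * diagonal (d i)‖ * ‖q' i - q i‖ :=
        norm_sub_le_of_isUnit_of_mulVec_sub_eq (hW d hd_mem hw_sum) _ _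
          (sum_diagonal_mul_mulVec_sub M d q q' x y hw)
    _ ≤ ∑ i, α i * ‖q' i - q i‖ := by
        gcongr with i
        exact (hα i).2 ⟨d, hd_mem, hw_sum, rfl⟩
end

section
/- Let M_0,...,M_k have the row W-property and let x* be the unique solution of the extended vertical linear complementarity problem min_{0≤i≤k}(M_i x + q_i) = 0. Then there exists a tuple (D̃_0,...,D̃_k) of nonnegative diagonal matrices with entries in [0,1] and Σ_i D̃_i = I such that x* = −(Σ_{i=0}^k D̃_i M_i)^{-1} Σ_{i=0}^k D̃_i q_i. -/
/-!
Each component of the residuals `r i = M i *ᵥ x + q i` attains its minimum `0` at some index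
`σ s`. Taking `D i = diagonal (fun s => if i = σ s then 1 else 0)` gives `∑ i, D i *ᵥ r i = 0`,
i.e. `(∑ i, D i * M i) *ᵥ x = -∑ i, D i *ᵥ q i`, and the row W-property makes that matrix
invertible.
-/

open Matrix

theorem exists_eq_of_ciInf_eq {ι α : Type*} [Finite ι] [Nonempty ι]
    [ConditionallyCompleteLinearOrder α] {f : ι → α} {a : α} (h : ⨅ i, f i = a) :
    ∃ i, f i = a :=
  h ▸ exists_eq_ciInf_of_finite

theorem Matrix.eq_neg_inv_mulVec_of_mulVec_add_eq_zero {m R : Type*} [Fintype m]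
    [DecidableEq m] [CommRing R] {A : Matrix m m R} (hA : IsUnit A) {x b : m → R}
    (h : A *ᵥ x + b = 0) : x = -(A⁻¹ *ᵥ b) := by
  have := hA.invertible
  rw [← mulVec_neg, inv_mulVec_eq_vec (eq_neg_of_add_eq_zero_left h).symm]

theorem Matrix.sum_diagonal_mul_mulVec_add_sum_diagonal_mulVec_apply {ι m R : Type*}
    [Fintype ι] [Fintype m] [DecidableEq m] [CommRing R] (d : ι → m → R)
    (M : ι → Matrix m m R) (q : ι → m → R) (x : m → R) (s : m) :
    ((∑ i, diagonal (d i) * M i) *ᵥ x + ∑ i, diagonal (d i) *ᵥ q i) s =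
      ∑ i, d i s * (M i *ᵥ x + q i) s := by
  simp only [sum_mulVec, ← mulVec_mulVec, Pi.add_apply, Finset.sum_apply, mulVec_diagonal,
    ← Finset.sum_add_distrib, mul_add]

section SelectionWeights

variable {ι m : Type*} [DecidableEq ι] (σ : m → ι)

def selectionWeights (i : ι) (s : m) : ℝ :=
  if i = σ s then 1 else 0

theorem selectionWeights_mem_Icc (i : ι) (s : m) : selectionWeights σ i s ∈ Set.Icc (0 : ℝ) 1 := by
  unfold selectionWeights
  split_ifs <;> norm_num

variable [Fintype ι]

theorem sum_selectionWeights (s : m) : ∑ i, selectionWeights σ i s = 1 := by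
  simp [selectionWeights]

theorem sum_selectionWeights_mul (s : m) (r : ι → ℝ) :
    ∑ i, selectionWeights σ i s * r i = r (σ s) := by
  simp [selectionWeights]

end SelectionWeights

theorem stmt_13 (n k : ℕ) (M : Fin (k+1) → Matrix (Fin n) (Fin n) ℝ)
    (hW : ∀ d : Fin (k+1) → Fin n → ℝ,
      (∀ i s, d i s ∈ Set.Icc (0:ℝ) 1) → (∀ s, ∑ i, d i s = 1) →
      IsUnit (∑ i, Matrix.diagonal (d i) * M i))
    (q : Fin (k+1) → Fin n → ℝ) (x : Fin n → ℝ)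
    (hx : ∀ s, (⨅ i, (M i *ᵥ x + q i) s) = 0) :
    ∃ d : Fin (k+1) → Fin n → ℝ,
      (∀ i s, d i s ∈ Set.Icc (0:ℝ) 1) ∧ (∀ s, ∑ i, d i s = 1) ∧
      x = -((∑ i, Matrix.diagonal (d i) * M i)⁻¹ *ᵥ ∑ i, Matrix.diagonal (d i) *ᵥ q i) := by
  choose σ hσ using fun s => exists_eq_of_ciInf_eq (hx s)
  have hIcc := selectionWeights_mem_Icc σ
  have hsum := sum_selectionWeights σ
  refine ⟨selectionWeights σ, hIcc, hsum, ?_⟩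
  refine eq_neg_inv_mulVec_of_mulVec_add_eq_zero (hW _ hIcc hsum) (funext fun s => ?_)
  rw [sum_diagonal_mul_mulVec_add_sum_diagonal_mulVec_apply, sum_selectionWeights_mul, hσ s]
  rfl
end

section
/- Let M_0,...,M_k have positive diagonal entries, write M_i = Λ_i − C_i with Λ_i the diagonal part, and assume ρ(max_{0≤i≤k} Λ_i^{-1}|C_i|) < 1. Then for each ℓ and every tuple (D_0,...,D_k) of nonnegative diagonal matrices with entries in [0,1] summing to I, ‖(Σ_{i=0}^k D_i M_i)^{-1} D_ℓ‖ ≤ ‖(I − max_{0≤i≤k} Λ_i^{-1}|C_i|)^{-1} Λ_ℓ^{-1}‖, where the norm is any monotone matrix norm (e.g. the infinity norm). -/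
/-!
Write `V = ∑ Dᵢ Λᵢ` (diagonal with positive entries) and `U = ∑ Dᵢ Cᵢ`, so that
`∑ Dᵢ Mᵢ = V (1 - V⁻¹ U)`. Row `s` of `V⁻¹ U` is a convex combination of the rows `s` of the
`Λᵢ⁻¹ Cᵢ`, hence `|V⁻¹ U| ≤ W` entrywise. By Gelfand's formula `ρ(W) < 1` makes the Neumann
series `∑ Wᵏ` converge, and `|Xᵏ| ≤ Wᵏ` then gives `|(1 - V⁻¹ U)⁻¹| ≤ (1 - W)⁻¹` entrywise.
Together with `V⁻¹ D_ℓ ≤ Λ_ℓ⁻¹` this bounds `(∑ Dᵢ Mᵢ)⁻¹ D_ℓ` entrywise by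
`(1 - W)⁻¹ Λ_ℓ⁻¹`, and the norm is monotone.
-/

open Matrix Filter
open scoped ENNReal

theorem summable_pow_of_spectralRadius_lt_one {A : Type*} [NormedRing A] [NormedAlgebra ℂ A]
    [CompleteSpace A] {a : A} (ha : spectralRadius ℂ a < 1) : Summable (a ^ · : ℕ → A) := by
  obtain ⟨r, har, hr1⟩ := ENNReal.lt_iff_exists_nnreal_btwn.mp ha
  have hr1' : (r : ℝ) < 1 := by exact_mod_cast hr1
  refine .of_norm_bounded_eventually_nat (summable_geometric_of_lt_one r.coe_nonneg hr1') ?_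
  have hgelfand := spectrum.pow_nnnorm_pow_one_div_tendsto_nhds_spectralRadius a
  filter_upwards [hgelfand.eventually_lt_const har, eventually_gt_atTop 0] with k hk hk0
  have hk' : (‖a ^ k‖₊ : ℝ≥0∞) ≤ (r : ℝ≥0∞) ^ k := by
    simpa [← ENNReal.rpow_natCast, ← ENNReal.rpow_mul, hk0.ne'] using
      ENNReal.rpow_le_rpow hk.le (by positivity : (0 : ℝ) ≤ k)
  have hk'' : ‖a ^ k‖₊ ≤ r ^ k := by exact_mod_cast hk'
  simpa using NNReal.coe_le_coe.2 hk''

namespace Matrix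

variable {m : Type*}

theorem summable_apply {ι n R : Type*} [AddCommMonoid R] [TopologicalSpace R]
    {f : ι → Matrix m n R} (hf : Summable f) (s : m) (t : n) :
    Summable fun k => f k s t :=
  Pi.summable.1 (Pi.summable.1 hf s) t

theorem tsum_apply {ι n R : Type*} [AddCommMonoid R] [TopologicalSpace R] [T2Space R]
    {f : ι → Matrix m n R} (hf : Summable f) (s : m) (t : n) :
    (∑' k, f k) s t = ∑' k, f k s t :=
  (congrFun (_root_.tsum_apply hf) t).trans (_root_.tsum_apply (Pi.summable.1 hf s))

section Neumann

variable [Fintype m] [DecidableEq m]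

theorem summable_pow_of_spectralRadius_map_ofReal_lt_one {W : Matrix m m ℝ}
    (hW : spectralRadius ℂ (W.map (Complex.ofReal : ℝ → ℂ)) < 1) :
    Summable (W ^ · : ℕ → Matrix m m ℝ) := by
  have hpow (k : ℕ) : W.map Complex.ofReal ^ k = (W ^ k).map Complex.ofRealHom :=
    (Matrix.map_pow W Complex.ofRealHom k).symm
  -- Matrices carry no global norm; any submultiplicative one serves Gelfand's formula.
  let := Matrix.linftyOpNormedRing (n := m) (α := ℂ)
  let := Matrix.linftyOpNormedAlgebra (n := m) (R := ℂ) (α := ℂ)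
  have hre := (summable_pow_of_spectralRadius_lt_one hW).map
    (Complex.reAddGroupHom.mapMatrix : Matrix m m ℂ →+ Matrix m m ℝ)
    (continuous_id.matrix_map Complex.continuous_re)
  convert hre using 2 with k
  ext s t
  simp [hpow]

theorem abs_pow_apply_le {X W : Matrix m m ℝ} (hXW : ∀ s t, |X s t| ≤ W s t) (k : ℕ)
    (s t : m) : |(X ^ k) s t| ≤ (W ^ k) s t := by
  induction k generalizing t with
  | zero => by_cases h : s = t <;> simp [h]
  | succ k ih =>
    simp only [pow_succ, mul_apply]
    refine (Finset.abs_sum_le_sum_abs _ _).trans (Finset.sum_le_sum fun u _ => ?_)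
    rw [abs_mul]
    exact mul_le_mul (ih u) (hXW u t) (abs_nonneg _) ((abs_nonneg _).trans (ih u))

theorem summable_pow_of_abs_apply_le {X W : Matrix m m ℝ} (hXW : ∀ s t, |X s t| ≤ W s t)
    (hW : Summable (W ^ · : ℕ → _)) : Summable (X ^ · : ℕ → _) :=
  Pi.summable.2 fun s => Pi.summable.2 fun t =>
    .of_norm_bounded (summable_apply hW s t) fun k => abs_pow_apply_le hXW k s t

theorem abs_tsum_pow_apply_le {X W : Matrix m m ℝ} (hXW : ∀ s t, |X s t| ≤ W s t)
    (hW : Summable (W ^ · : ℕ → _)) (s t : m) :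
    |(∑' k, X ^ k) s t| ≤ (∑' k, W ^ k) s t := by
  rw [tsum_apply (summable_pow_of_abs_apply_le hXW hW), tsum_apply hW]
  exact tsum_of_norm_bounded (f := fun k => (X ^ k) s t) (summable_apply hW s t).hasSum
    fun k => abs_pow_apply_le hXW k s t

theorem abs_inv_one_sub_apply_le {X W : Matrix m m ℝ} (hXW : ∀ s t, |X s t| ≤ W s t)
    (hW : spectralRadius ℂ (W.map (Complex.ofReal : ℝ → ℂ)) < 1) (s t : m) :
    |(1 - X)⁻¹ s t| ≤ (1 - W)⁻¹ s t := by
  have hWsum := summable_pow_of_spectralRadius_map_ofReal_lt_one hW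
  rw [inv_eq_right_inv hWsum.one_sub_mul_tsum_pow,
    inv_eq_right_inv (summable_pow_of_abs_apply_le hXW hWsum).one_sub_mul_tsum_pow]
  exact abs_tsum_pow_apply_le hXW hWsum s t

end Neumann

theorem inv_diagonal_of_ne_zero [Fintype m] [DecidableEq m] {K : Type*} [Field K] {v : m → K}
    (hv : ∀ s, v s ≠ 0) : (diagonal v)⁻¹ = diagonal v⁻¹ := by
  refine inv_eq_right_inv ?_
  rw [diagonal_mul_diagonal, ← diagonal_one]
  exact congrArg diagonal (funext fun s => mul_inv_cancel₀ (hv s))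

theorem abs_mul_diagonal_apply_le [Fintype m] [DecidableEq m] {l : Type*} {P Q : Matrix l m ℝ}
    {p q : m → ℝ} {s : l} {t : m} (hPQ : |P s t| ≤ Q s t) (hp : 0 ≤ p t) (hpq : p t ≤ q t) :
    |(P * diagonal p) s t| ≤ (Q * diagonal q) s t := by
  rw [mul_diagonal, mul_diagonal, abs_mul, abs_of_nonneg hp]
  exact mul_le_mul hPQ hpq hp ((abs_nonneg _).trans hPQ)

section Splitting

variable {ι : Type*} [Fintype ι] (d : ι → m → ℝ) (M : ι → Matrix m m ℝ)

def weightedDiag : m → ℝ := ∑ i, d i * (M i).diag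

theorem weightedDiag_apply (s : m) : weightedDiag d M s = ∑ i, d i s * M i s s :=
  Finset.sum_apply _ _ _

variable {d M} in
theorem weightedDiag_pos (hd : ∀ i s, 0 ≤ d i s) (hsum : ∀ s, ∑ i, d i s = 1)
    (hM : ∀ i s, 0 < M i s s) (s : m) : 0 < weightedDiag d M s := by
  obtain ⟨i, -, hi⟩ := (Finset.sum_pos_iff_of_nonneg fun i _ => hd i s).1 (hsum s ▸ one_pos)
  rw [weightedDiag_apply]
  exact Finset.sum_pos' (fun j _ => mul_nonneg (hd j s) (hM j s).le)
    ⟨i, Finset.mem_univ i, mul_pos hi (hM i s)⟩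

variable {d M} in
theorem inv_weightedDiag_mul_le_inv (hd : ∀ i s, 0 ≤ d i s) (hM : ∀ i s, 0 < M i s s)
    (hv : 0 < weightedDiag d M s) (i : ι) :
    (weightedDiag d M s)⁻¹ * d i s ≤ (M i s s)⁻¹ := by
  rw [inv_mul_le_iff₀ hv, ← div_eq_mul_inv, le_div_iff₀ (hM i s), weightedDiag_apply]
  exact Finset.single_le_sum (f := fun j => d j s * M j s s)
    (fun j _ => mul_nonneg (hd j s) (hM j s).le) (Finset.mem_univ i)

variable [Fintype m] [DecidableEq m]

def weightedOffDiag : Matrix m m ℝ := ∑ i, diagonal (d i) * (diagonal (M i).diag - M i)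

theorem sum_diagonal_mul_eq_sub :
    ∑ i, diagonal (d i) * M i = diagonal (weightedDiag d M) - weightedOffDiag d M := by
  ext s t
  by_cases h : s = t <;> simp [weightedDiag, weightedOffDiag, sum_apply, h, mul_sub]

theorem sum_diagonal_mul_eq_diagonal_mul (hv : ∀ s, weightedDiag d M s ≠ 0) :
    ∑ i, diagonal (d i) * M i =
      diagonal (weightedDiag d M) *
        (1 - diagonal (weightedDiag d M)⁻¹ * weightedOffDiag d M) := by
  rw [mul_sub, mul_one, ← mul_assoc, diagonal_mul_diagonal, sum_diagonal_mul_eq_sub]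
  simp [hv]

variable {d M}

theorem abs_diagonal_inv_mul_weightedOffDiag_apply_le {W : Matrix m m ℝ}
    (hd : ∀ i s, 0 ≤ d i s) (hv : ∀ s, 0 < weightedDiag d M s)
    (hCW : ∀ i s t, |(diagonal (M i).diag - M i) s t| ≤ M i s s * W s t) (s t : m) :
    |(diagonal (weightedDiag d M)⁻¹ * weightedOffDiag d M) s t| ≤ W s t := by
  simp only [weightedOffDiag, diagonal_mul, sum_apply, Pi.inv_apply]
  calc |(weightedDiag d M s)⁻¹ * ∑ i, d i s * (diagonal (M i).diag - M i) s t|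
      = (weightedDiag d M s)⁻¹ * |∑ i, d i s * (diagonal (M i).diag - M i) s t| := by
        rw [abs_mul, abs_inv, abs_of_pos (hv s)]
    _ ≤ (weightedDiag d M s)⁻¹ * ∑ i, d i s * (M i s s * W s t) := by
        refine mul_le_mul_of_nonneg_left ((Finset.abs_sum_le_sum_abs _ _).trans
          (Finset.sum_le_sum fun i _ => ?_)) (inv_nonneg.2 (hv s).le)
        rw [abs_mul, abs_of_nonneg (hd i s)]
        exact mul_le_mul_of_nonneg_left (hCW i s t) (hd i s)
    _ = W s t := by
        simp_rw [← mul_assoc, ← Finset.sum_mul, ← weightedDiag_apply]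
        exact inv_mul_cancel_left₀ (hv s).ne' _

end Splitting

end Matrix

theorem stmt_14 (n k : ℕ) (M : Fin (k+1) → Matrix (Fin n) (Fin n) ℝ)
    (hdiag : ∀ i s, 0 < M i s s)
    (W : Matrix (Fin n) (Fin n) ℝ)
    (hWdef : ∀ s t, W s t = ⨆ i, |(Matrix.diagonal (fun u => M i u u) - M i) s t| / M i s s)
    (hρ : spectralRadius ℂ (W.map (Complex.ofReal : ℝ → ℂ)) < 1)
    (N : Matrix (Fin n) (Fin n) ℝ → ℝ)
    (hN : ∀ A B : Matrix (Fin n) (Fin n) ℝ, (∀ s t, |A s t| ≤ B s t) → N A ≤ N B)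
    (d : Fin (k+1) → Fin n → ℝ)
    (hd : ∀ i s, d i s ∈ Set.Icc (0:ℝ) 1) (hsum : ∀ s, ∑ i, d i s = 1)
    (ℓ : Fin (k+1)) :
    N ((∑ i, Matrix.diagonal (d i) * M i)⁻¹ * Matrix.diagonal (d ℓ)) ≤
      N ((1 - W)⁻¹ * (Matrix.diagonal fun u => M ℓ u u)⁻¹) := by
  have hd0 : ∀ i s, 0 ≤ d i s := fun i s => (hd i s).1
  have hv := weightedDiag_pos hd0 hsum hdiag
  have hCW (i s t) : |(diagonal (M i).diag - M i) s t| ≤ M i s s * W s t :=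
    (div_le_iff₀' (hdiag i s)).1 <| (hWdef s t).symm ▸
      le_ciSup (f := fun j => |(diagonal (M j).diag - M j) s t| / M j s s)
        (Set.finite_range _).bddAbove i
  rw [sum_diagonal_mul_eq_diagonal_mul d M fun s => (hv s).ne', Matrix.mul_inv_rev, mul_assoc,
    inv_diagonal_of_ne_zero fun s => (hv s).ne', inv_diagonal_of_ne_zero fun s => (hdiag ℓ s).ne',
    diagonal_mul_diagonal]
  refine hN _ _ fun s t => abs_mul_diagonal_apply_le
    (abs_inv_one_sub_apply_le (abs_diagonal_inv_mul_weightedOffDiag_apply_le hd0 hv hCW) hρ s t)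
    (mul_nonneg (inv_nonneg.2 (hv t).le) (hd0 ℓ t))
    (inv_weightedDiag_mul_le_inv hd0 hdiag (hv t) ℓ)
end

section
/- Let (M_0,...,M_k) have the row W-property with constants α_i as defined, and suppose perturbations satisfy ‖ΔM_i‖ ≤ ε_i‖M_i‖ and ‖Δq_i‖ ≤ ε_i‖(−q_i)_+‖ with η := Σ_{i=0}^k ε_i α_i ‖M_i‖ < 1. Let x solve min_i(M_i x + q_i) = 0 and y solve min_i((M_i+ΔM_i) y + q_i+Δq_i) = 0 (both unique). Then ‖x − y‖ / ‖x‖ ≤ 2η/(1−η), provided x ≠ 0. -/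
/-!
In each row `s` both `min_i (M_i x + q_i)_s` and the perturbed minimum vanish, so a convex
combination of the row indices kills their difference. Collecting these weights into diagonal
matrices `D_i` and writing `A = Σ D_i M_i` (invertible by the row W-property) gives
`A (x - y) = Σ D_i (ΔM_i y + Δq_i)`, hence `‖x - y‖ ≤ Σ α_i ‖ΔM_i y + Δq_i‖ ≤ η (‖x‖ + ‖y‖)`,
where `‖Δq_i‖` is controlled through `‖(-q_i)_+‖ ≤ ‖M_i‖ ‖x‖`. With `‖y‖ ≤ ‖x‖ + ‖x - y‖`
this rearranges to `(1 - η) ‖x - y‖ ≤ 2 η ‖x‖`.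
-/

open Matrix

attribute [local instance] Matrix.linftyOpNormedRing

section Weights

variable {ι : Type*} [Fintype ι]

theorem exists_mem_stdSimplex_sum_mul_eq_zero {c : ι → ℝ} {i₀ i₁ : ι}
    (h₀ : c i₀ ≤ 0) (h₁ : 0 ≤ c i₁) : ∃ w ∈ stdSimplex ℝ ι, ∑ i, w i * c i = 0 := by
  classical
  have : (0 : ℝ) ∈ segment ℝ (c i₀) (c i₁) := by
    rw [segment_eq_Icc (h₀.trans h₁)]
    exact ⟨h₀, h₁⟩
  obtain ⟨a, b, ha, hb, hab, hzero⟩ := this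
  refine ⟨a • Pi.single i₀ 1 + b • Pi.single i₁ 1,
    convex_stdSimplex ℝ ι (single_mem_stdSimplex ℝ i₀) (single_mem_stdSimplex ℝ i₁) ha hb hab, ?_⟩
  simpa [add_mul, Finset.sum_add_distrib, Pi.single_apply, mul_assoc] using hzero

theorem exists_mem_stdSimplex_sum_mul_sub_eq_zero [Nonempty ι] {a b : ι → ℝ}
    (ha : ⨅ i, a i = 0) (hb : ⨅ i, b i = 0) :
    ∃ w ∈ stdSimplex ℝ ι, ∑ i, w i * (a i - b i) = 0 := by
  obtain ⟨i₀, hi₀⟩ := exists_eq_ciInf_of_finite (f := a)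
  obtain ⟨i₁, hi₁⟩ := exists_eq_ciInf_of_finite (f := b)
  have hb₀ : 0 ≤ b i₀ := hb ▸ ciInf_le (Set.finite_range b).bddBelow i₀
  have ha₁ : 0 ≤ a i₁ := ha ▸ ciInf_le (Set.finite_range a).bddBelow i₁
  exact exists_mem_stdSimplex_sum_mul_eq_zero (c := a - b) (i₀ := i₀) (i₁ := i₁)
    (by simp only [Pi.sub_apply]; linarith) (by simp only [Pi.sub_apply]; linarith)

end Weights

section RowMixture

variable {ι n : Type*} [Fintype ι] [Fintype n] [DecidableEq n]

/-- The paper's `Σ_j D_j M_j`, with `D_j = diagonal (d j)`. -/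
def rowMixture (d : ι → n → ℝ) (M : ι → Matrix n n ℝ) : Matrix n n ℝ :=
  ∑ i, diagonal (d i) * M i

theorem rowMixture_mulVec_apply (d : ι → n → ℝ) (M : ι → Matrix n n ℝ) (v : n → ℝ) (s : n) :
    (rowMixture d M *ᵥ v) s = ∑ i, d i s * (M i *ᵥ v) s := by
  simp [rowMixture, sum_mulVec, ← mulVec_mulVec, mulVec_diagonal]

theorem rowMixture_mulVec_sub_eq {d : ι → n → ℝ} {M ΔM : ι → Matrix n n ℝ}
    {q Δq : ι → n → ℝ} {x y : n → ℝ}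
    (hd : ∀ s, ∑ i, d i s * ((M i *ᵥ x + q i) s - ((M i + ΔM i) *ᵥ y + (q i + Δq i)) s) = 0) :
    rowMixture d M *ᵥ (x - y) = ∑ i, diagonal (d i) *ᵥ (ΔM i *ᵥ y + Δq i) := by
  funext s
  rw [rowMixture_mulVec_apply, ← sub_eq_zero, ← hd s]
  simp only [Finset.sum_apply, mulVec_diagonal, ← Finset.sum_sub_distrib, mulVec_sub,
    add_mulVec, Pi.add_apply, Pi.sub_apply]
  exact Finset.sum_congr rfl fun i _ => by ring

end RowMixture

theorem norm_le_sum_of_mulVec_eq_sum {ι n : Type*} [Fintype ι] [Fintype n] [DecidableEq n]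
    {A : Matrix n n ℝ} (hA : IsUnit A) {B : ι → Matrix n n ℝ} {v : n → ℝ} {r : ι → n → ℝ}
    (h : A *ᵥ v = ∑ i, B i *ᵥ r i) : ‖v‖ ≤ ∑ i, ‖A⁻¹ * B i‖ * ‖r i‖ := by
  have hv : v = ∑ i, (A⁻¹ * B i) *ᵥ r i := by
    rw [← one_mulVec v, ← nonsing_inv_mul A ((isUnit_iff_isUnit_det A).mp hA), ← mulVec_mulVec,
      h, mulVec_sum]
    simp only [mulVec_mulVec]
  rw [hv]
  exact (norm_sum_le _ _).trans
    (Finset.sum_le_sum fun i _ => linfty_opNorm_mulVec _ _)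

section Perturbation

variable {n : Type*} [Fintype n] [DecidableEq n] {M ΔM : Matrix n n ℝ} {q Δq x y : n → ℝ} {ε : ℝ}

theorem norm_max_zero_neg_le (hx : ∀ s, 0 ≤ (M *ᵥ x + q) s) :
    ‖(fun s => max 0 (-q s) : n → ℝ)‖ ≤ ‖M‖ * ‖x‖ := by
  refine (pi_norm_le_iff_of_nonneg (by positivity)).2 fun s => ?_
  have hq : -q s ≤ |(M *ᵥ x) s| := by
    have := hx s
    rw [Pi.add_apply] at this
    exact (neg_le_iff_add_nonneg.2 this).trans (le_abs_self _)
  calc ‖max 0 (-q s)‖ = max 0 (-q s) := by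
        rw [Real.norm_eq_abs, abs_of_nonneg (le_max_left _ _)]
    _ ≤ ‖(M *ᵥ x) s‖ := max_le (abs_nonneg _) hq
    _ ≤ ‖M *ᵥ x‖ := norm_le_pi_norm _ s
    _ ≤ ‖M‖ * ‖x‖ := linfty_opNorm_mulVec _ _

theorem norm_perturbation_mulVec_add_le (hx : ∀ s, 0 ≤ (M *ᵥ x + q) s)
    (hΔM : ‖ΔM‖ ≤ ε * ‖M‖) (hΔq : ‖Δq‖ ≤ ε * ‖(fun s => max 0 (-q s) : n → ℝ)‖) :
    ‖ΔM *ᵥ y + Δq‖ ≤ ε * ‖M‖ * (‖x‖ + ‖y‖) := by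
  have hq := norm_max_zero_neg_le hx
  -- a negative `ε` forces `M = 0`, hence `q ≥ 0` and `Δq = 0`
  have hΔq' : ‖Δq‖ ≤ ε * ‖M‖ * ‖x‖ := by
    rcases le_or_gt 0 ε with hε | hε
    · calc ‖Δq‖ ≤ ε * (‖M‖ * ‖x‖) := hΔq.trans (mul_le_mul_of_nonneg_left hq hε)
        _ = ε * ‖M‖ * ‖x‖ := by ring
    · have hM : ‖M‖ = 0 := by nlinarith [norm_nonneg ΔM, norm_nonneg M]
      rw [hM, zero_mul] at hq
      simpa [hM, le_antisymm hq (norm_nonneg _)] using hΔq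
  calc ‖ΔM *ᵥ y + Δq‖ ≤ ‖ΔM‖ * ‖y‖ + ‖Δq‖ :=
        (norm_add_le _ _).trans (add_le_add_left (linfty_opNorm_mulVec _ _) _)
    _ ≤ ε * ‖M‖ * ‖y‖ + ε * ‖M‖ * ‖x‖ := by gcongr
    _ = ε * ‖M‖ * (‖x‖ + ‖y‖) := by ring

end Perturbation

theorem norm_sub_div_norm_le_of_norm_sub_le {E : Type*} [NormedAddCommGroup E] {x y : E}
    {η : ℝ} (hx : x ≠ 0) (hη : η < 1) (h : ‖x - y‖ ≤ η * (‖x‖ + ‖y‖)) :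
    ‖x - y‖ / ‖x‖ ≤ 2 * η / (1 - η) := by
  have hx' : 0 < ‖x‖ := norm_pos_iff.2 hx
  have hy : ‖y‖ ≤ ‖x‖ + ‖x - y‖ := by
    simpa using norm_sub_le x (x - y)
  have hη0 : 0 ≤ η := by nlinarith [norm_nonneg (x - y), norm_nonneg y]
  rw [div_le_div_iff₀ hx' (by linarith)]
  nlinarith [mul_le_mul_of_nonneg_left hy hη0]

theorem stmt_17 (n k : ℕ) (M ΔM : Fin (k+1) → Matrix (Fin n) (Fin n) ℝ)
    (q Δq : Fin (k+1) → Fin n → ℝ)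
    (hW : ∀ d : Fin (k+1) → Fin n → ℝ,
      (∀ i s, d i s ∈ Set.Icc (0:ℝ) 1) → (∀ s, ∑ i, d i s = 1) →
      IsUnit (∑ i, Matrix.diagonal (d i) * M i))
    (α : Fin (k+1) → ℝ)
    (hα : ∀ i, IsGreatest {r : ℝ | ∃ d : Fin (k+1) → Fin n → ℝ,
      (∀ i' s, d i' s ∈ Set.Icc (0:ℝ) 1) ∧ (∀ s, ∑ i', d i' s = 1) ∧
      r = ‖(∑ i', Matrix.diagonal (d i') * M i')⁻¹ * Matrix.diagonal (d i)‖} (α i))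
    (ε : Fin (k+1) → ℝ)
    (hΔM : ∀ i, ‖ΔM i‖ ≤ ε i * ‖M i‖)
    (hΔq : ∀ i, ‖Δq i‖ ≤ ε i * ‖(fun s => max 0 (-(q i s)) : Fin n → ℝ)‖)
    (η : ℝ) (hη : ∑ i, ε i * (α i * ‖M i‖) = η) (hη1 : η < 1)
    (x y : Fin n → ℝ)
    (hx : ∀ s, (⨅ i, (M i *ᵥ x + q i) s) = 0)
    (hy : ∀ s, (⨅ i, ((M i + ΔM i) *ᵥ y + (q i + Δq i)) s) = 0)
    (hx0 : x ≠ 0) :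
    ‖x - y‖ / ‖x‖ ≤ 2 * η / (1 - η) := by
  have hx_nonneg : ∀ i s, 0 ≤ (M i *ᵥ x + q i) s := fun i s =>
    hx s ▸ ciInf_le (Set.finite_range _).bddBelow i
  choose w hw hwxy using fun s => exists_mem_stdSimplex_sum_mul_sub_eq_zero (hx s) (hy s)
  set d : Fin (k+1) → Fin n → ℝ := fun i s => w s i
  have hd : ∀ i s, d i s ∈ Set.Icc (0:ℝ) 1 := fun i s => mem_Icc_of_mem_stdSimplex (hw s) i
  have hd1 : ∀ s, ∑ i, d i s = 1 := fun s => (hw s).2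
  have hres : ∀ i, ‖ΔM i *ᵥ y + Δq i‖ ≤ ε i * ‖M i‖ * (‖x‖ + ‖y‖) := fun i =>
    norm_perturbation_mulVec_add_le (hx_nonneg i) (hΔM i) (hΔq i)
  refine norm_sub_div_norm_le_of_norm_sub_le hx0 hη1 ?_
  calc ‖x - y‖ ≤ ∑ i, ‖(rowMixture d M)⁻¹ * diagonal (d i)‖ * ‖ΔM i *ᵥ y + Δq i‖ :=
        norm_le_sum_of_mulVec_eq_sum (hW d hd hd1) (rowMixture_mulVec_sub_eq hwxy)
    _ ≤ ∑ i, α i * (ε i * ‖M i‖ * (‖x‖ + ‖y‖)) := by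
        refine Finset.sum_le_sum fun i _ => ?_
        have hαi : ‖(rowMixture d M)⁻¹ * diagonal (d i)‖ ≤ α i := (hα i).2 ⟨d, hd, hd1, rfl⟩
        exact mul_le_mul hαi (hres i) (norm_nonneg _) ((norm_nonneg _).trans hαi)
    _ = η * (‖x‖ + ‖y‖) := by
        rw [← hη, Finset.sum_mul]
        exact Finset.sum_congr rfl fun i _ => by ring
end
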